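/- Let λ be a partition with an even number ℓ(λ) = 2k of parts, all parts odd and pairwise distinct. Then the Newell–Littlewood coefficient N^λ_{λλ} is at least 1. (This is the combinatorial content of the proposition that the representation ⊗³ detects the subgroup 𝕊_{∥λ∥}(G) of GL_N for G of type B_n, C_n, or D_{2n} when λ has an even number of parts, all distinct and odd.) -/

import Mathlib

/-- A partition: a weakly decreasing finite sequence (list) of positive
integers. -/
def IsPartition (l : List ℕ) : Prop :=
  l.Pairwise (· ≥ ·) ∧ ∀ x ∈ l, 0 < x

/-- The `i`-th part (0-indexed) of a partition, `0` beyond its length. -/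
def part (l : List ℕ) (i : ℕ) : ℕ := l.getD i 0

/-- Cell `(i, j)` (row `i`, column `j`, both 0-indexed) lies in the skew
Young diagram `ν/λ`. -/
def InSkew (nu lam : List ℕ) (i j : ℕ) : Prop :=
  part lam i ≤ j ∧ j < part nu i

/-- Cell `(i, j)` comes weakly before cell `(r, c)` in the reverse reading
order: rows are read top to bottom, and each row is read right to left. -/
def ReadingLE (i j r c : ℕ) : Prop := i < r ∨ (i = r ∧ c ≤ j)

/-- `T` is a Littlewood–Richardson tableau of shape `ν/λ` and content `μ`:
`λ ⊆ ν`, the entries of `T` are positive exactly on the cells of the skew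
diagram `ν/λ`, entries weakly increase from left to right along rows,
entries strictly increase from top to bottom down columns, for every `j ≥ 1`
the entry `j` occurs exactly `μ_j` times, and the reverse reading word is a
lattice word: every prefix contains at least as many occurrences of `j` as
of `j + 1`, for every `j ≥ 1`. -/
structure IsLRTableau (nu lam mu : List ℕ) (T : ℕ → ℕ → ℕ) : Prop where
  subset : ∀ i, part lam i ≤ part nu i
  support : ∀ i j, 0 < T i j ↔ InSkew nu lam i j
  row_weak : ∀ i j j', InSkew nu lam i j → InSkew nu lam i j' → j ≤ j' →
    T i j ≤ T i j'
  col_strict : ∀ i i' j, InSkew nu lam i j → InSkew nu lam i' j → i < i' →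
    T i j < T i' j
  content : ∀ k : ℕ, {p : ℕ × ℕ | T p.1 p.2 = k + 1}.ncard = part mu k
  lattice : ∀ r c k : ℕ,
    {p : ℕ × ℕ | T p.1 p.2 = k + 2 ∧ ReadingLE p.1 p.2 r c}.ncard ≤
    {p : ℕ × ℕ | T p.1 p.2 = k + 1 ∧ ReadingLE p.1 p.2 r c}.ncard

/-- The Littlewood–Richardson coefficient `c^ν_{λμ}`: the number of
Littlewood–Richardson tableaux of shape `ν/λ` and content `μ`. -/
noncomputable def lrCoeff (nu lam mu : List ℕ) : ℕ :=
  {T : ℕ → ℕ → ℕ | IsLRTableau nu lam mu T}.ncard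

/-- The Newell–Littlewood coefficient
`N^ν_{λμ} = Σ_{α,β,γ} c^λ_{αβ} · c^μ_{αγ} · c^ν_{βγ}`, the sum running over
all triples of partitions `(α, β, γ)` (only finitely many terms are
nonzero). -/
noncomputable def nlCoeff (lam mu nu : List ℕ) : ℕ :=
  ∑ᶠ x : {l : List ℕ // IsPartition l} × {l : List ℕ // IsPartition l} ×
      {l : List ℕ // IsPartition l},
    lrCoeff lam x.1.val x.2.1.val * lrCoeff mu x.1.val x.2.2.val *
      lrCoeff nu x.2.1.val x.2.2.val

/-!
Write `ℓ(λ) = 2k` and `λ_i = 2h_i + 1`, and let `δ_i = h_i + 1` for `i < k` and `δ_i = h_i` for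
`k ≤ i < 2k`, so that `|λ| = 2|δ|`. Then `c^λ_{δδ} ≥ 1`: in row `i` of `λ/δ` put `i + 1` to the
right of the middle cell `h_i`, and put `v + 1` into the middle cell of row `k + v`. Since `h` is
antitone, moving a cell of row `i + 1` into row `i` at the same offset from the middle cell lowers
its entry by one, which gives the lattice property. Hence the term `(α, β, γ) = (δ, δ, δ)` of
`N^λ_{λλ}` is positive.
-/
theorem part_eq_zero_of_length_le {l : List ℕ} {i : ℕ} (h : l.length ≤ i) : part l i = 0 :=
  List.getD_eq_default _ _ h

theorem part_mem {l : List ℕ} {i : ℕ} (h : i < l.length) : part l i ∈ l := by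
  rw [part, List.getD_eq_getElem _ _ h]
  exact List.getElem_mem h

theorem lt_length_of_part_pos {l : List ℕ} {i : ℕ} (h : 0 < part l i) : i < l.length := by
  by_contra hi
  rw [part_eq_zero_of_length_le (not_lt.mp hi)] at h
  exact h.false

theorem exists_part_eq_of_mem {l : List ℕ} {x : ℕ} (h : x ∈ l) : ∃ i, part l i = x := by
  obtain ⟨i, hi, rfl⟩ := List.mem_iff_getElem.mp h
  exact ⟨i, by rw [part, List.getD_eq_getElem _ _ hi]⟩

theorem part_le_sum (l : List ℕ) (i : ℕ) : part l i ≤ l.sum := by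
  rcases lt_or_ge i l.length with hi | hi
  · exact List.le_sum_of_mem (part_mem hi)
  · simp [part_eq_zero_of_length_le hi]

theorem IsPartition.antitone_part {l : List ℕ} (hl : IsPartition l) : Antitone (part l) := by
  intro i j hij
  rcases lt_or_ge j l.length with hj | hj
  · have hi : i < l.length := lt_of_le_of_lt hij hj
    rw [part, part, List.getD_eq_getElem _ _ hj, List.getD_eq_getElem _ _ hi]
    rcases hij.lt_or_eq with hlt | rfl
    · exact List.pairwise_iff_getElem.mp hl.1 i j hi hj hlt
    · exact le_rfl
  · simp [part_eq_zero_of_length_le hj]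

theorem IsPartition.length_le_of_part_le {l m : List ℕ} (hl : IsPartition l)
    (h : ∀ i, part l i ≤ part m i) : l.length ≤ m.length := by
  by_contra hlen
  have hpos := hl.2 _ (part_mem (not_le.mp hlen))
  have := h m.length
  rw [part_eq_zero_of_length_le le_rfl] at this
  omega

theorem exists_isPartition_part_eq {f : ℕ → ℕ} (hf : Antitone f) {n : ℕ} (hn : f n = 0) :
    ∃ l, IsPartition l ∧ part l = f := by
  induction n generalizing f with
  | zero => exact ⟨[], ⟨.nil, by simp⟩, funext fun i => (Nat.le_zero.mp (hn ▸ hf i.zero_le)).symm⟩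
  | succ n ih =>
    obtain ⟨l, hl, hpart⟩ := ih (f := fun i => f (i + 1)) (fun i j hij => hf (by omega)) hn
    rcases Nat.eq_zero_or_pos (f 0) with h0 | h0
    · exact ⟨[], ⟨.nil, by simp⟩, funext fun i => (Nat.le_zero.mp (h0 ▸ hf i.zero_le)).symm⟩
    refine ⟨f 0 :: l, ⟨List.pairwise_cons.mpr ⟨fun x hx => ?_, hl.1⟩, ?_⟩, funext fun i => ?_⟩
    · obtain ⟨i, rfl⟩ := exists_part_eq_of_mem hx
      rw [hpart]
      exact hf (Nat.zero_le _)
    · rintro x (_ | ⟨_, hx⟩)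
      · exact h0
      · exact hl.2 x hx
    · cases i with
      | zero => rfl
      | succ i => exact congrFun hpart i

def skewBox (nu : List ℕ) : Finset (ℕ × ℕ) := Finset.range nu.length ×ˢ Finset.range nu.sum

theorem InSkew.mem_skewBox {nu lam : List ℕ} {i j : ℕ} (h : InSkew nu lam i j) :
    (i, j) ∈ skewBox nu :=
  Finset.mem_product.mpr
    ⟨Finset.mem_range.mpr (lt_length_of_part_pos ((Nat.zero_le j).trans_lt h.2)),
      Finset.mem_range.mpr (lt_of_lt_of_le h.2 (part_le_sum nu i))⟩

theorem finite_level_of_support {nu lam : List ℕ} {T : ℕ → ℕ → ℕ}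
    (hT : ∀ i j, 0 < T i j ↔ InSkew nu lam i j) (v : ℕ) :
    {p : ℕ × ℕ | T p.1 p.2 = v + 1}.Finite :=
  (skewBox nu).finite_toSet.subset fun p hp => ((hT p.1 p.2).mp (by simp_all)).mem_skewBox

theorem lattice_of_injOn {T : ℕ → ℕ → ℕ} (φ : ℕ × ℕ → ℕ × ℕ)
    (hfin : ∀ v, {p : ℕ × ℕ | T p.1 p.2 = v + 1}.Finite)
    (hφ : ∀ v p, T p.1 p.2 = v + 2 → T (φ p).1 (φ p).2 = v + 1 ∧ (φ p).1 < p.1)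
    (hinj : Set.InjOn φ {p | 0 < p.1}) (r c v : ℕ) :
    {p : ℕ × ℕ | T p.1 p.2 = v + 2 ∧ ReadingLE p.1 p.2 r c}.ncard ≤
      {p : ℕ × ℕ | T p.1 p.2 = v + 1 ∧ ReadingLE p.1 p.2 r c}.ncard := by
  refine Set.ncard_le_ncard_of_injOn φ (fun p ⟨hp, hle⟩ => ⟨(hφ v p hp).1, ?_⟩)
    (hinj.mono fun p hp => (Nat.zero_le _).trans_lt (hφ v p hp.1).2)
    ((hfin v).subset fun p hp => hp.1)
  have := (hφ v p hp).2
  unfold ReadingLE at hle ⊢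
  omega

namespace IsLRTableau

variable {nu lam mu : List ℕ} {T : ℕ → ℕ → ℕ}

theorem le_length_content (hT : IsLRTableau nu lam mu T) (i j : ℕ) : T i j ≤ mu.length := by
  obtain h0 | ⟨v, hv⟩ : T i j = 0 ∨ ∃ v, T i j = v + 1 := by
    rcases T i j with _ | v <;> simp
  · simp [h0]
  · have hpos : 0 < part mu v := by
      rw [← hT.content v]
      exact (Set.ncard_pos (finite_level_of_support hT.support v)).mpr ⟨(i, j), hv⟩
    have := lt_length_of_part_pos hpos
    omega

theorem mem_skewBox (hT : IsLRTableau nu lam mu T) {i j : ℕ} (h : T i j ≠ 0) :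
    (i, j) ∈ skewBox nu :=
  ((hT.support i j).mp (Nat.pos_of_ne_zero h)).mem_skewBox

theorem length_inner_le (hT : IsLRTableau nu lam mu T) (hlam : IsPartition lam) :
    lam.length ≤ nu.length :=
  hlam.length_le_of_part_le hT.subset

theorem le_sum_of_mem_inner (hT : IsLRTableau nu lam mu T) {x : ℕ} (hx : x ∈ lam) :
    x ≤ nu.sum := by
  obtain ⟨i, rfl⟩ := exists_part_eq_of_mem hx
  exact (hT.subset i).trans (part_le_sum nu i)

theorem level_subset_skewBox (hT : IsLRTableau nu lam mu T) (v : ℕ) :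
    {p : ℕ × ℕ | T p.1 p.2 = v + 1} ⊆ skewBox nu :=
  fun p hp => hT.mem_skewBox (by simp_all)

theorem le_card_skewBox_of_mem_content (hT : IsLRTableau nu lam mu T) {x : ℕ} (hx : x ∈ mu) :
    x ≤ (skewBox nu).card := by
  obtain ⟨v, rfl⟩ := exists_part_eq_of_mem hx
  rw [← hT.content v, ← Set.ncard_coe_finset]
  exact Set.ncard_le_ncard (hT.level_subset_skewBox v)

theorem length_content_le (hT : IsLRTableau nu lam mu T) (hmu : IsPartition mu) :
    mu.length ≤ (skewBox nu).card := by
  classical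
  have hval : ∀ v < mu.length, v + 1 ∈ (skewBox nu).image fun p => T p.1 p.2 := by
    intro v hv
    have hpos := hmu.2 _ (part_mem hv)
    rw [← hT.content v] at hpos
    obtain ⟨p, hp⟩ := (Set.ncard_pos (finite_level_of_support hT.support v)).mp hpos
    exact Finset.mem_image.mpr ⟨p, hT.level_subset_skewBox v hp, hp⟩
  calc mu.length = (Finset.range mu.length).card := (Finset.card_range _).symm
    _ ≤ ((skewBox nu).image fun p => T p.1 p.2).card :=
      Finset.card_le_card_of_injOn (· + 1) (fun v hv => hval v (Finset.mem_range.mp hv))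
        (fun _ _ _ _ h => Nat.succ_injective h)
    _ ≤ (skewBox nu).card := Finset.card_image_le

end IsLRTableau

theorem finite_setOf_isLRTableau (nu lam mu : List ℕ) :
    {T | IsLRTableau nu lam mu T}.Finite := by
  let restrict (T : ℕ → ℕ → ℕ) (p : skewBox nu) : ℕ := T p.1.1 p.1.2
  refine Set.Finite.of_finite_image (f := restrict)
    ((Set.Finite.pi (t := fun _ => Set.Iic mu.length) fun _ => Set.finite_Iic _).subset ?_) ?_
  · rintro _ ⟨T, hT, rfl⟩ p -
    exact hT.le_length_content _ _
  · intro T hT T' hT' h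
    funext i j
    by_cases hmem : (i, j) ∈ skewBox nu
    · exact congrFun h ⟨(i, j), hmem⟩
    · rw [not_imp_comm.mp (hT.mem_skewBox (i := i) (j := j)) hmem,
        not_imp_comm.mp (hT'.mem_skewBox (i := i) (j := j)) hmem]

theorem lrCoeff_pos {nu lam mu : List ℕ} {T : ℕ → ℕ → ℕ} (hT : IsLRTableau nu lam mu T) :
    0 < lrCoeff nu lam mu :=
  (Set.ncard_pos (finite_setOf_isLRTableau nu lam mu)).mpr ⟨T, hT⟩

theorem finite_setOf_length_le_forall_le (N : ℕ) :
    {l : List ℕ | l.length ≤ N ∧ ∀ x ∈ l, x ≤ N}.Finite := by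
  refine ((List.finite_length_le (Fin (N + 1)) N).image (List.map Fin.val)).subset ?_
  rintro l ⟨hlen, hle⟩
  refine ⟨l.pmap (fun x hx => ⟨x, Nat.lt_succ_of_le hx⟩) hle, by simpa using hlen, ?_⟩
  simp [List.map_pmap]

theorem finite_support_nlCoeff_summand (lam mu nu : List ℕ) :
    (Function.support fun x : {l : List ℕ // IsPartition l} × {l : List ℕ // IsPartition l} ×
        {l : List ℕ // IsPartition l} =>
      lrCoeff lam x.1.val x.2.1.val * lrCoeff mu x.1.val x.2.2.val *
        lrCoeff nu x.2.1.val x.2.2.val).Finite := by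
  set N := lam.length + lam.sum + (skewBox lam).card + (skewBox mu).card
  set S := {l : List ℕ | l.length ≤ N ∧ ∀ x ∈ l, x ≤ N}
  have hS : S.Finite := finite_setOf_length_le_forall_le N
  refine ((hS.prod (hS.prod hS)).preimage
    (f := fun x => (x.1.val, x.2.1.val, x.2.2.val)) ?_).subset ?_
  · rintro ⟨⟨a, _⟩, ⟨b, _⟩, ⟨c, _⟩⟩ - ⟨⟨a', _⟩, ⟨b', _⟩, ⟨c', _⟩⟩ - h
    simp_all
  rintro ⟨⟨a, ha⟩, ⟨b, hb⟩, ⟨c, hc⟩⟩ hx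
  simp only [Function.mem_support, ne_eq, mul_eq_zero, not_or] at hx
  obtain ⟨⟨hab, hac⟩, -⟩ := hx
  obtain ⟨T, hT⟩ := Set.nonempty_of_ncard_ne_zero hab
  obtain ⟨T', hT'⟩ := Set.nonempty_of_ncard_ne_zero hac
  show a ∈ S ∧ b ∈ S ∧ c ∈ S
  have := hT.length_inner_le ha
  have := hT.length_content_le hb
  have := hT'.length_content_le hc
  refine ⟨⟨by omega, fun x hx => ?_⟩, ⟨by omega, fun x hx => ?_⟩, ⟨by omega, fun x hx => ?_⟩⟩
  · have := hT.le_sum_of_mem_inner hx; omega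
  · have := hT.le_card_skewBox_of_mem_content hx; omega
  · have := hT'.le_card_skewBox_of_mem_content hx; omega

theorem lrCoeff_mul_le_nlCoeff (lam mu nu : List ℕ) (a b c : {l : List ℕ // IsPartition l}) :
    lrCoeff lam a b * lrCoeff mu a c * lrCoeff nu b c ≤ nlCoeff lam mu nu :=
  single_le_finsum (a, b, c) (finite_support_nlCoeff_summand lam mu nu) fun _ => Nat.zero_le _

def halvingTableau (h : ℕ → ℕ) (k i j : ℕ) : ℕ :=
  if i < 2 * k ∧ h i < j ∧ j ≤ 2 * h i then i + 1
  else if k ≤ i ∧ i < 2 * k ∧ j = h i then i + 1 - k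
  else 0

section HalvingTableau

variable {h : ℕ → ℕ} {k : ℕ}

theorem halvingTableau_eq_succ_iff {i j v : ℕ} :
    halvingTableau h k i j = v + 1 ↔
      (i = v ∧ v < 2 * k ∧ h v < j ∧ j ≤ 2 * h v) ∨ (v < k ∧ i = v + k ∧ j = h (v + k)) := by
  unfold halvingTableau
  constructor
  · intro hT
    split_ifs at hT with hnormal hmiddle
    · obtain rfl : i = v := by omega
      exact Or.inl ⟨rfl, hnormal⟩
    · obtain rfl : i = v + k := by omega
      exact Or.inr ⟨by omega, rfl, hmiddle.2.2⟩
  · rintro (⟨rfl, hnormal⟩ | ⟨hv, rfl, rfl⟩)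
    · rw [if_pos hnormal]
    · rw [if_neg (by omega), if_pos ⟨by omega, by omega, rfl⟩]
      omega

theorem ncard_halvingTableau_eq_succ (v : ℕ) :
    {p : ℕ × ℕ | halvingTableau h k p.1 p.2 = v + 1}.ncard =
      if v < k then h v + 1 else if v < 2 * k then h v else 0 := by
  set row := (fun j => (v, j)) '' Set.Ioc (h v) (2 * h v)
  have hrow : row.ncard = h v := by
    rw [Set.ncard_image_of_injective _ (Prod.mk_right_injective v), ← Finset.coe_Ioc,
      Set.ncard_coe_finset, Nat.card_Ioc]
    omega
  have hrow_finite : row.Finite := (Set.finite_Ioc _ _).image _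
  split_ifs with hk h2k
  · have : {p : ℕ × ℕ | halvingTableau h k p.1 p.2 = v + 1} = insert (v + k, h (v + k)) row := by
      ext ⟨i, j⟩
      simp only [Set.mem_ofPred_eq, halvingTableau_eq_succ_iff, Set.mem_insert_iff, row,
        Set.mem_image, Set.mem_Ioc, Prod.mk.injEq]
      constructor
      · rintro (⟨rfl, -, hj⟩ | ⟨-, rfl, rfl⟩)
        · exact Or.inr ⟨j, hj, rfl, rfl⟩
        · exact Or.inl ⟨rfl, rfl⟩
      · rintro (⟨rfl, rfl⟩ | ⟨j, hj, rfl, rfl⟩)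
        · exact Or.inr ⟨hk, rfl, rfl⟩
        · exact Or.inl ⟨rfl, by omega, hj⟩
    rw [this, Set.ncard_insert_of_notMem _ hrow_finite, hrow]
    rintro ⟨j, -, hj⟩
    simp only [Prod.mk.injEq] at hj
    omega
  · have : {p : ℕ × ℕ | halvingTableau h k p.1 p.2 = v + 1} = row := by
      ext ⟨i, j⟩
      simp only [Set.mem_ofPred_eq, halvingTableau_eq_succ_iff, row, Set.mem_image, Set.mem_Ioc,
        Prod.mk.injEq]
      constructor
      · rintro (⟨rfl, -, hj⟩ | ⟨hv, -⟩)
        · exact ⟨j, hj, rfl, rfl⟩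
        · exact absurd hv hk
      · rintro ⟨j, hj, rfl, rfl⟩
        exact Or.inl ⟨rfl, h2k, hj⟩
    rw [this, hrow]
  · have : {p : ℕ × ℕ | halvingTableau h k p.1 p.2 = v + 1} = ∅ := by
      ext ⟨i, j⟩
      simp only [Set.mem_ofPred_eq, halvingTableau_eq_succ_iff, Set.mem_empty_iff_false,
        iff_false]
      omega
    rw [this, Set.ncard_empty]

theorem finite_setOf_halvingTableau_eq_succ (v : ℕ) :
    {p : ℕ × ℕ | halvingTableau h k p.1 p.2 = v + 1}.Finite := by
  refine ((Set.finite_Iic (v + k)).prod (Set.finite_Iic (2 * h v + h (v + k)))).subset ?_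
  intro p hp
  rw [Set.mem_ofPred_eq, halvingTableau_eq_succ_iff] at hp
  simp only [Set.mem_prod, Set.mem_Iic]
  omega

theorem halvingTableau_lattice (hh : Antitone h) (r c v : ℕ) :
    {p : ℕ × ℕ | halvingTableau h k p.1 p.2 = v + 2 ∧ ReadingLE p.1 p.2 r c}.ncard ≤
      {p : ℕ × ℕ | halvingTableau h k p.1 p.2 = v + 1 ∧ ReadingLE p.1 p.2 r c}.ncard := by
  refine lattice_of_injOn (fun p => (p.1 - 1, p.2 + (h (p.1 - 1) - h p.1)))
    finite_setOf_halvingTableau_eq_succ (fun v p hT => ?_) ?_ r c v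
  · obtain ⟨i, j⟩ := p
    simp only [halvingTableau_eq_succ_iff] at hT ⊢
    rcases hT with ⟨rfl, hv, hj⟩ | ⟨hv, rfl, rfl⟩
    · have := hh (Nat.le_add_right v 1)
      simp only [Nat.add_sub_cancel, true_and]
      omega
    · have := hh (Nat.le_add_right (v + k) 1)
      rw [show v + 1 + k - 1 = v + k by omega, show v + 1 + k = v + k + 1 by omega]
      omega
  · rintro ⟨i, j⟩ (hi : 0 < i) ⟨i', j'⟩ (hi' : 0 < i') heq
    simp only [Prod.mk.injEq] at heq ⊢
    obtain rfl : i = i' := by omega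
    omega

end HalvingTableau

theorem isLRTableau_halvingTableau {h : ℕ → ℕ} {k : ℕ} {lam δ : List ℕ} (hh : Antitone h)
    (hlam : ∀ i, part lam i = if i < 2 * k then 2 * h i + 1 else 0)
    (hδ : ∀ i, part δ i = if i < k then h i + 1 else if i < 2 * k then h i else 0) :
    IsLRTableau lam δ δ (halvingTableau h k) where
  subset i := by
    rw [hlam, hδ]
    split_ifs <;> omega
  support i j := by
    unfold InSkew halvingTableau
    rw [hlam, hδ]
    split_ifs <;> omega
  row_weak i j j' := by
    simp only [InSkew, halvingTableau, hlam, hδ]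
    split_ifs <;> omega
  col_strict i i' j := by
    simp only [InSkew, halvingTableau, hlam, hδ]
    intro _ _ hii'
    have := hh hii'.le
    split_ifs at * <;> omega
  content v := by
    rw [ncard_halvingTableau_eq_succ, hδ]
  lattice := halvingTableau_lattice hh

theorem one_le_nlCoeff_of_distinct_odd_parts_general (lam : List ℕ)
    (hlam : IsPartition lam) (hlen : Even lam.length)
    (hodd : ∀ x ∈ lam, Odd x) :
    1 ≤ nlCoeff lam lam lam := by
  obtain ⟨k, hk⟩ := hlen
  set h : ℕ → ℕ := fun i => part lam i / 2
  have hh : Antitone h := fun i j hij => Nat.div_le_div_right (hlam.antitone_part hij)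
  have hrow : ∀ i, part lam i = if i < 2 * k then 2 * h i + 1 else 0 := by
    intro i
    split_ifs with hi
    · obtain ⟨m, hm⟩ := hodd _ (part_mem (by omega : i < lam.length))
      simp only [h]
      omega
    · exact part_eq_zero_of_length_le (by omega)
  obtain ⟨δ, hδ, hδpart⟩ := exists_isPartition_part_eq
    (f := fun i => if i < k then h i + 1 else if i < 2 * k then h i else 0)
    (fun i j hij => by dsimp only; have := hh hij; split_ifs <;> omega) (n := 2 * k)
    (by split_ifs <;> omega)
  have hc := lrCoeff_pos (isLRTableau_halvingTableau hh hrow (congrFun hδpart))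
  calc 1 ≤ lrCoeff lam δ δ * lrCoeff lam δ δ * lrCoeff lam δ δ :=
        Nat.mul_pos (Nat.mul_pos hc hc) hc
    _ ≤ nlCoeff lam lam lam := lrCoeff_mul_le_nlCoeff lam lam lam ⟨δ, hδ⟩ ⟨δ, hδ⟩ ⟨δ, hδ⟩

/-- If `λ` has an even number of parts, all pairwise distinct and odd, then
`N^λ_{λλ} ≥ 1`; equivalently, `⊗³` detects `𝕊_{∥λ∥}(G)` in this case. -/
theorem one_le_nlCoeff_of_distinct_odd_parts (lam : List ℕ)
    (hlam : IsPartition lam) (hlen : Even lam.length)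
    (hdist : lam.Nodup) (hodd : ∀ x ∈ lam, Odd x) :
    1 ≤ nlCoeff lam lam lam :=
  one_le_nlCoeff_of_distinct_odd_parts_general lam hlam hlen hodd
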